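/- A rational function T(x₁,x₂) ∈ ℚ(x₁,x₂) is a mutation invariant of the A₁ × A₁ type (i.e., T(2/x₁, x₂) = T(x₁,x₂) = T(x₁, 2/x₂)) and is a Laurent polynomial if and only if there exists a polynomial G(X₁,X₂) ∈ ℚ[X₁,X₂] such that T(x₁,x₂) = G(x₁ + 2/x₁, x₂ + 2/x₂). -/

import Mathlib

open MvPolynomial

/-- The field of rational functions `ℚ(x₁, x₂)`. -/
noncomputable abbrev QF := FractionRing (MvPolynomial (Fin 2) ℚ)

noncomputable def x₁ : QF := algebraMap (MvPolynomial (Fin 2) ℚ) QF (X 0)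
noncomputable def x₂ : QF := algebraMap (MvPolynomial (Fin 2) ℚ) QF (X 1)

/-- The ring hom `ℚ →+* ℚ(x₁,x₂)`. -/
noncomputable def φ : ℚ →+* QF :=
  (algebraMap (MvPolynomial (Fin 2) ℚ) QF).comp (MvPolynomial.C)

/-- Evaluation of a polynomial `p ∈ ℚ[X₁,X₂]` at a pair of elements of
`ℚ(x₁,x₂)`. -/
noncomputable def pev (p : MvPolynomial (Fin 2) ℚ) (a b : QF) : QF :=
  MvPolynomial.eval₂ φ ![a, b] p

/-!
Averaging over the group generated by the two mutations gives
`4 T = ∑ cₘ (x₁ᵏ + (2/x₁)ᵏ) (x₂ˡ + (2/x₂)ˡ)` for the Laurent expansion `T = ∑ cₘ x₁ᵏ x₂ˡ`, and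
`uₖ = xᵏ + (2/x)ᵏ` is a polynomial in `x + 2/x` by `uₖ₊₂ = (x + 2/x) uₖ₊₁ - 2 uₖ`,
`u₋ₖ = 2⁻ᵏ uₖ`. The mutations are `ℚ`-algebra endomorphisms of `ℚ(x₁, x₂)`, obtained from the
universal property of the fraction field because `(2/x₁, x₂)` and `(x₁, 2/x₂)` are algebraically
independent; applying them yields the invariance under the double mutation needed for the
averaging, and conversely the invariance of `G(x₁ + 2/x₁, x₂ + 2/x₂)`.
-/

open Algebra

theorem AlgebraicIndependent.pair_iff {R A : Type*} [CommRing R] [CommRing A] [Algebra R A]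
    {a b : A} :
    AlgebraicIndependent R ![a, b] ↔
      AlgebraicIndependent R ![b] ∧ Transcendental (adjoin R (Set.range ![b])) a := by
  rw [← AlgebraicIndependent.option_iff (R := R) (x := ![b]) (a := a)]
  exact algebraicIndependent_equiv' (R := R) (finSuccEquiv 1) (by ext i; fin_cases i <;> rfl)

theorem AlgebraicIndependent.pair_swap {R A : Type*} [CommRing R] [CommRing A] [Algebra R A]
    {a b : A} (h : AlgebraicIndependent R ![a, b]) : AlgebraicIndependent R ![b, a] :=
  (algebraicIndependent_equiv' (Equiv.swap 0 1) (by ext i; fin_cases i <;> rfl)).mpr h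

section Field

variable {F K : Type*} [Field F] [Field K] [Algebra F K]

theorem AlgebraicIndependent.pair_div_left {a b : K} (h : AlgebraicIndependent F ![a, b])
    {c : F} (hc : c ≠ 0) : AlgebraicIndependent F ![algebraMap F K c / a, b] := by
  rw [AlgebraicIndependent.pair_iff] at h ⊢
  refine ⟨h.1, fun halg => h.2 ?_⟩
  have hc' : algebraMap F (adjoin F (Set.range ![b])) c ∈ nonZeroDivisors _ :=
    mem_nonZeroDivisors_of_ne_zero (by simpa using hc)
  rw [← IsAlgebraic.inv_iff]
  refine IsAlgebraic.of_smul hc' ?_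
  rwa [Algebra.smul_def, ← IsScalarTower.algebraMap_apply, ← div_eq_mul_inv]

theorem AlgebraicIndependent.pair_div_right {a b : K} (h : AlgebraicIndependent F ![a, b])
    {c : F} (hc : c ≠ 0) : AlgebraicIndependent F ![a, algebraMap F K c / b] :=
  (h.pair_swap.pair_div_left hc).pair_swap

theorem pow_add_div_pow_succ_succ {x c : K} (hx : x ≠ 0) (n : ℕ) :
    x ^ (n + 2) + (c / x) ^ (n + 2) =
      (x + c / x) * (x ^ (n + 1) + (c / x) ^ (n + 1)) - c * (x ^ n + (c / x) ^ n) := by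
  simp only [div_pow]
  field_simp
  ring

theorem zpow_neg_add_div_zpow_neg {x c : K} (hx : x ≠ 0) (hc : c ≠ 0) (n : ℕ) :
    x ^ (-(n : ℤ)) + (c / x) ^ (-(n : ℤ)) = (c ^ n)⁻¹ * (x ^ n + (c / x) ^ n) := by
  simp only [zpow_neg, zpow_natCast, div_pow]
  field_simp
  ring

theorem zpow_add_div_zpow_mem_adjoin {x : K} (hx : x ≠ 0) {c : F} (hc : c ≠ 0) (n : ℤ) :
    x ^ n + (algebraMap F K c / x) ^ n ∈ adjoin F {x + algebraMap F K c / x} := by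
  set W := adjoin F {x + algebraMap F K c / x}
  have hz : x + algebraMap F K c / x ∈ W := subset_adjoin rfl
  have hnat (n : ℕ) : x ^ n + (algebraMap F K c / x) ^ n ∈ W ∧
      x ^ (n + 1) + (algebraMap F K c / x) ^ (n + 1) ∈ W := by
    induction n with
    | zero => exact ⟨by simpa using add_mem W.one_mem W.one_mem, by simpa using hz⟩
    | succ n ih =>
      refine ⟨ih.2, ?_⟩
      rw [pow_add_div_pow_succ_succ hx]
      exact sub_mem (mul_mem hz ih.2) (mul_mem (W.algebraMap_mem c) ih.1)
  obtain ⟨m, rfl | rfl⟩ := Int.eq_nat_or_neg n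
  · simpa using (hnat m).1
  · rw [zpow_neg_add_div_zpow_neg hx (by simpa using hc), ← map_pow, ← map_inv₀]
    exact mul_mem (W.algebraMap_mem _) (hnat m).1

end Field

section Laurent

variable {R K L : Type*} [CommRing R] [Field K] [Field L] [Algebra R K] [Algebra R L]

noncomputable def laurentEval (p : MvPolynomial (Fin 2) R) (s t : ℕ) (a b : K) : K :=
  aeval ![a, b] p / (a ^ s * b ^ t)

theorem AlgHom.map_laurentEval (f : K →ₐ[R] L) (p : MvPolynomial (Fin 2) R) (s t : ℕ) (a b : K) :
    f (laurentEval p s t a b) = laurentEval p s t (f a) (f b) := by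
  rw [laurentEval, laurentEval, map_div₀, comp_aeval_apply, map_mul, map_pow, map_pow]
  congr 3
  ext i
  fin_cases i <;> rfl

theorem laurentEval_eq_sum_zpow (p : MvPolynomial (Fin 2) R) (s t : ℕ) {a b : K}
    (ha : a ≠ 0) (hb : b ≠ 0) :
    laurentEval p s t a b = ∑ m ∈ p.support,
      algebraMap R K (coeff m p) * (a ^ ((m 0 : ℤ) - s) * b ^ ((m 1 : ℤ) - t)) := by
  rw [laurentEval, aeval_def, eval₂_eq', Finset.sum_div]
  refine Finset.sum_congr rfl fun m _ => ?_
  simp only [Fin.prod_univ_two, Matrix.cons_val_zero, Matrix.cons_val_one, zpow_sub₀ ha,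
    zpow_sub₀ hb, zpow_natCast]
  field_simp

theorem exists_laurentEval_eq_of_mem_adjoin {a b : K} (ha : a ≠ 0) (hb : b ≠ 0) {y : K}
    (hy : y ∈ adjoin R {a, a⁻¹, b, b⁻¹}) :
    ∃ (p : MvPolynomial (Fin 2) R) (s t : ℕ), y = laurentEval p s t a b := by
  induction hy using Algebra.adjoin_induction with
  | mem y hy =>
    rcases hy with rfl | rfl | rfl | rfl
    · exact ⟨X 0, 0, 0, by simp [laurentEval]⟩
    · exact ⟨1, 1, 0, by simp [laurentEval]⟩
    · exact ⟨X 1, 0, 0, by simp [laurentEval]⟩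
    · exact ⟨1, 0, 1, by simp [laurentEval]⟩
  | algebraMap r => exact ⟨C r, 0, 0, by simp [laurentEval]⟩
  | add y z _ _ hy hz =>
    obtain ⟨p, s, t, rfl⟩ := hy
    obtain ⟨q, u, v, rfl⟩ := hz
    refine ⟨p * X 0 ^ u * X 1 ^ v + q * X 0 ^ s * X 1 ^ t, s + u, t + v, ?_⟩
    simp only [laurentEval, map_add, map_mul, map_pow, aeval_X, Matrix.cons_val_zero,
      Matrix.cons_val_one, pow_add]
    field_simp
  | mul y z _ _ hy hz =>
    obtain ⟨p, s, t, rfl⟩ := hy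
    obtain ⟨q, u, v, rfl⟩ := hz
    refine ⟨p * q, s + u, t + v, ?_⟩
    simp only [laurentEval, map_mul, pow_add]
    field_simp

end Laurent

theorem mem_adjoin_of_laurentEval_eq {F K : Type*} [Field F] [CharZero F] [Field K] [Algebra F K]
    {a b : K} (ha : a ≠ 0) (hb : b ≠ 0) {c : F} (hc : c ≠ 0) {p : MvPolynomial (Fin 2) F}
    {s t : ℕ} {T : K} (h₀ : laurentEval p s t a b = T)
    (h₁ : laurentEval p s t (algebraMap F K c / a) b = T)
    (h₂ : laurentEval p s t a (algebraMap F K c / b) = T)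
    (h₁₂ : laurentEval p s t (algebraMap F K c / a) (algebraMap F K c / b) = T) :
    T ∈ adjoin F (Set.range ![a + algebraMap F K c / a, b + algebraMap F K c / b]) := by
  set c' := algebraMap F K c
  have hc' : c' ≠ 0 := by simpa [c'] using hc
  have ha' : c' / a ≠ 0 := div_ne_zero hc' ha
  have hb' : c' / b ≠ 0 := div_ne_zero hc' hb
  have hsum : (4 : K) * T = ∑ m ∈ p.support, algebraMap F K (coeff m p) *
      ((a ^ ((m 0 : ℤ) - s) + (c' / a) ^ ((m 0 : ℤ) - s)) *
        (b ^ ((m 1 : ℤ) - t) + (c' / b) ^ ((m 1 : ℤ) - t))) := by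
    calc (4 : K) * T = laurentEval p s t a b + laurentEval p s t (c' / a) b +
          laurentEval p s t a (c' / b) + laurentEval p s t (c' / a) (c' / b) := by
          rw [h₀, h₁, h₂, h₁₂]; ring
      _ = _ := by
          rw [laurentEval_eq_sum_zpow p s t ha hb, laurentEval_eq_sum_zpow p s t ha' hb,
            laurentEval_eq_sum_zpow p s t ha hb', laurentEval_eq_sum_zpow p s t ha' hb',
            ← Finset.sum_add_distrib, ← Finset.sum_add_distrib, ← Finset.sum_add_distrib]
          exact Finset.sum_congr rfl fun m _ => by ring
  have hT : T = algebraMap F K 4⁻¹ * (4 * T) := by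
    rw [← mul_assoc, ← map_ofNat (algebraMap F K) 4, ← map_mul, inv_mul_cancel₀ (by norm_num),
      map_one, one_mul]
  rw [hT, hsum]
  refine mul_mem (algebraMap_mem _ _) (sum_mem fun m _ => mul_mem (algebraMap_mem _ _) ?_)
  exact mul_mem (adjoin_mono (by simp [c']) (zpow_add_div_zpow_mem_adjoin ha hc _))
    (adjoin_mono (by simp [c']) (zpow_add_div_zpow_mem_adjoin hb hc _))

theorem pev_eq_aeval (p : MvPolynomial (Fin 2) ℚ) (a b : QF) : pev p a b = aeval ![a, b] p := by
  rw [pev, aeval_def, φ, ← MvPolynomial.algebraMap_eq, ← IsScalarTower.algebraMap_eq]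

theorem pev_div_eq_laurentEval (p : MvPolynomial (Fin 2) ℚ) (s t : ℕ) (a b : QF) :
    pev p a b / (a ^ s * b ^ t) = laurentEval p s t a b := by
  rw [pev_eq_aeval, laurentEval]

theorem algebraicIndependent_x₁_x₂ : AlgebraicIndependent ℚ ![x₁, x₂] := by
  convert (MvPolynomial.algebraicIndependent_X (Fin 2) ℚ).map'
    (f := IsScalarTower.toAlgHom ℚ (MvPolynomial (Fin 2) ℚ) QF) (IsFractionRing.injective _ _)
  ext i
  fin_cases i <;> rfl

theorem x₁_ne_zero : x₁ ≠ 0 := algebraicIndependent_x₁_x₂.ne_zero 0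

theorem x₂_ne_zero : x₂ ≠ 0 := algebraicIndependent_x₁_x₂.ne_zero 1

noncomputable def μ₁ : QF →ₐ[ℚ] QF :=
  IsFractionRing.liftAlgHom (algebraicIndependent_x₁_x₂.pair_div_left (two_ne_zero (α := ℚ)))

noncomputable def μ₂ : QF →ₐ[ℚ] QF :=
  IsFractionRing.liftAlgHom (algebraicIndependent_x₁_x₂.pair_div_right (two_ne_zero (α := ℚ)))

@[simp] theorem μ₁_x₁ : μ₁ x₁ = 2 / x₁ := by simp [μ₁, x₁, IsFractionRing.lift_algebraMap]
@[simp] theorem μ₁_x₂ : μ₁ x₂ = x₂ := by simp [μ₁, x₂, IsFractionRing.lift_algebraMap]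
@[simp] theorem μ₂_x₁ : μ₂ x₁ = x₁ := by simp [μ₂, x₁, IsFractionRing.lift_algebraMap]
@[simp] theorem μ₂_x₂ : μ₂ x₂ = 2 / x₂ := by simp [μ₂, x₂, IsFractionRing.lift_algebraMap]

theorem μ₁_aeval (G : MvPolynomial (Fin 2) ℚ) :
    μ₁ (aeval ![x₁ + 2 / x₁, x₂ + 2 / x₂] G) = aeval ![x₁ + 2 / x₁, x₂ + 2 / x₂] G := by
  rw [comp_aeval_apply]
  congr 1
  ext i
  fin_cases i
  · simp [map_ofNat, add_comm]
  · simp [map_ofNat]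

theorem μ₂_aeval (G : MvPolynomial (Fin 2) ℚ) :
    μ₂ (aeval ![x₁ + 2 / x₁, x₂ + 2 / x₂] G) = aeval ![x₁ + 2 / x₁, x₂ + 2 / x₂] G := by
  rw [comp_aeval_apply]
  congr 1
  ext i
  fin_cases i
  · simp [map_ofNat]
  · simp [map_ofNat, add_comm]

theorem aeval_mem_adjoin_x_inv (G : MvPolynomial (Fin 2) ℚ) :
    aeval ![x₁ + 2 / x₁, x₂ + 2 / x₂] G ∈ adjoin ℚ {x₁, x₁⁻¹, x₂, x₂⁻¹} := by
  refine adjoin_le ?_ ((adjoin_range_eq_range_aeval ℚ ![x₁ + 2 / x₁, x₂ + 2 / x₂]).ge ⟨G, rfl⟩)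
  rw [Set.range_subset_iff]
  intro i
  fin_cases i <;> simp only [div_eq_mul_inv] <;>
    exact add_mem (subset_adjoin (by simp)) (mul_mem (ofNat_mem _ 2) (subset_adjoin (by simp)))

def IsLaurentMutationInvariant (T : QF) : Prop :=
  ∃ (p : MvPolynomial (Fin 2) ℚ) (s t : ℕ), T = laurentEval p s t x₁ x₂ ∧
    laurentEval p s t (2 / x₁) x₂ = T ∧ laurentEval p s t x₁ (2 / x₂) = T

theorem IsLaurentMutationInvariant.exists_eq_aeval {T : QF} (hT : IsLaurentMutationInvariant T) :
    ∃ G : MvPolynomial (Fin 2) ℚ, T = aeval ![x₁ + 2 / x₁, x₂ + 2 / x₂] G := by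
  obtain ⟨p, s, t, h₀, h₁, h₂⟩ := hT
  have h₁₂ : laurentEval p s t (2 / x₁) (2 / x₂) = T :=
    calc laurentEval p s t (2 / x₁) (2 / x₂) = μ₁ (laurentEval p s t x₁ (2 / x₂)) := by
          simp [AlgHom.map_laurentEval, map_ofNat]
      _ = μ₁ (laurentEval p s t x₁ x₂) := by rw [h₂, h₀]
      _ = T := by simpa [AlgHom.map_laurentEval] using h₁
  have hmem := mem_adjoin_of_laurentEval_eq x₁_ne_zero x₂_ne_zero (c := (2 : ℚ)) two_ne_zero
    h₀.symm (by rwa [map_ofNat]) (by rwa [map_ofNat]) (by rwa [map_ofNat])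
  rw [map_ofNat, adjoin_range_eq_range_aeval] at hmem
  obtain ⟨G, hG⟩ := hmem
  exact ⟨G, hG.symm⟩

theorem isLaurentMutationInvariant_aeval (G : MvPolynomial (Fin 2) ℚ) :
    IsLaurentMutationInvariant (aeval ![x₁ + 2 / x₁, x₂ + 2 / x₂] G) := by
  obtain ⟨p, s, t, hp⟩ :=
    exists_laurentEval_eq_of_mem_adjoin x₁_ne_zero x₂_ne_zero (aeval_mem_adjoin_x_inv G)
  refine ⟨p, s, t, hp, ?_, ?_⟩
  · calc laurentEval p s t (2 / x₁) x₂ = μ₁ (laurentEval p s t x₁ x₂) := by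
          simp [AlgHom.map_laurentEval]
      _ = _ := by rw [← hp, μ₁_aeval]
  · calc laurentEval p s t x₁ (2 / x₂) = μ₂ (laurentEval p s t x₁ x₂) := by
          simp [AlgHom.map_laurentEval]
      _ = _ := by rw [← hp, μ₂_aeval]

theorem stmt_19_general (T : QF) :
    (∃ (p : MvPolynomial (Fin 2) ℚ) (s t : ℕ),
      T = pev p x₁ x₂ / (x₁ ^ s * x₂ ^ t) ∧
      pev p (2 / x₁) x₂ / ((2 / x₁) ^ s * x₂ ^ t) = T ∧
      pev p x₁ (2 / x₂) / (x₁ ^ s * (2 / x₂) ^ t) = T) ↔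
    ∃ G : MvPolynomial (Fin 2) ℚ, T = pev G (x₁ + 2 / x₁) (x₂ + 2 / x₂) := by
  simp only [pev_div_eq_laurentEval]
  simp only [pev_eq_aeval]
  refine ⟨IsLaurentMutationInvariant.exists_eq_aeval, ?_⟩
  rintro ⟨G, rfl⟩
  exact isLaurentMutationInvariant_aeval G

/-- A non-constant rational function `T ∈ ℚ(x₁,x₂)` is a Laurent mutation
invariant of type `A₁ × A₁` (it is a Laurent polynomial `p(x₁,x₂)/(x₁ˢx₂ᵗ)`
invariant under `x₁ ↦ 2/x₁` and `x₂ ↦ 2/x₂`) if and only if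
`T = G(x₁ + 2/x₁, x₂ + 2/x₂)` for some polynomial `G ∈ ℚ[X₁,X₂]`. -/
theorem stmt_19 (T : QF) (hnc : ¬ ∃ c : ℚ, T = φ c) :
    (∃ (p : MvPolynomial (Fin 2) ℚ) (s t : ℕ),
      T = pev p x₁ x₂ / (x₁ ^ s * x₂ ^ t) ∧
      pev p (2 / x₁) x₂ / ((2 / x₁) ^ s * x₂ ^ t) = T ∧
      pev p x₁ (2 / x₂) / (x₁ ^ s * (2 / x₂) ^ t) = T) ↔
    ∃ G : MvPolynomial (Fin 2) ℚ, T = pev G (x₁ + 2 / x₁) (x₂ + 2 / x₂) :=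
  stmt_19_general T
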